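/- For any Had_k-to-2Lin(2) gadget G there exists a Had_k-to-2Lin(2) gadget G̃ with completeness 1 − 2^{−k} such that (1 − rs(G))/(1 − c(G)) ≤ (1 − rs(G̃))/(1 − c(G̃)). -/

import Mathlib

open Finset
open scoped Classical

noncomputable section

/-- Boolean functions `𝔽₂^k → {1,−1}`, encoded with `true ↦ −1` and `false ↦ 1`. -/
abbrev BF (k : ℕ) := (Fin k → ZMod 2) → Bool

/-- The negation `−f` of a Boolean function. -/
def negB {k : ℕ} (f : BF k) : BF k := fun x => !(f x)

/-- The linear character `χ_α` as a Boolean function: `χ_α(x) = −1` iff `⟨α,x⟩ = 1`. -/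
def chiB {k : ℕ} (α : Fin k → ZMod 2) : BF k := fun x => decide (dotProduct α x = 1)

/-- `x_f` is a primary variable iff `f = ±χ_α` for some `α ≠ 0`. -/
def Primary {k : ℕ} (f : BF k) : Prop :=
  ∃ α : Fin k → ZMod 2, α ≠ 0 ∧ (f = chiB α ∨ f = negB (chiB α))

/-- The constant function `1`. -/
def oneB (k : ℕ) : BF k := fun _ => false

/-- The constant function `−1`. -/
def negOneB (k : ℕ) : BF k := fun _ => true

/-- `val(A,G) = Σ_{pairs} G(f₁,f₂)[A(x_{f₁}) = A(x_{f₂})]` (each unordered pair counted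
once via the symmetric sum). -/
def valA {k : ℕ} (G : BF k → BF k → ℝ) (A : BF k → ZMod 2) : ℝ :=
  (1 / 2 : ℝ) * ∑ f₁, ∑ f₂, G f₁ f₂ * (if A f₁ = A f₂ then 1 else 0)

/-- Assignments folded on the primary variables. -/
def sFoldSet (k : ℕ) : Finset (BF k → ZMod 2) :=
  univ.filter fun P => ∀ f, Primary f → P (negB f) = 1 + P f

/-- The (true) soundness `s(G)`: the expectation, over uniformly random folded assignments
`P` of the primary variables, of the maximum of `val(A,G)` over folded extensions `A`
of `P`. -/
def soundness {k : ℕ} (G : BF k → BF k → ℝ) : ℝ :=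
  ((sFoldSet k).card : ℝ)⁻¹ * ∑ P ∈ sFoldSet k,
    sSup {v : ℝ | ∃ A : BF k → ZMod 2, (∀ f, A (negB f) = 1 + A f) ∧
      (∀ f, Primary f → A f = P f) ∧ v = valA G A}

/-- Assignments folded on the primary variables and on the constants `x_1, x_{−1}`. -/
def rsFoldSet (k : ℕ) : Finset (BF k → ZMod 2) :=
  univ.filter fun P => ∀ f, (Primary f ∨ f = oneB k ∨ f = negOneB k) →
    P (negB f) = 1 + P f

/-- Wiman's relaxed soundness `rs(G)`: as `s(G)`, but the assignments `P` are folded on the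
primary variables and the constants, and the extension `A` must agree with `P` there but is
not required to be folded on the auxiliary variables. -/
def rsoundness {k : ℕ} (G : BF k → BF k → ℝ) : ℝ :=
  ((rsFoldSet k).card : ℝ)⁻¹ * ∑ P ∈ rsFoldSet k,
    sSup {v : ℝ | ∃ A : BF k → ZMod 2,
      (∀ f, (Primary f ∨ f = oneB k ∨ f = negOneB k) → A f = P f) ∧ v = valA G A}

/-- The normalized Hamming distance between Boolean functions. -/
def ndistB {k : ℕ} (f₁ f₂ : BF k) : ℝ :=
  (2 ^ k : ℝ)⁻¹ * ∑ x, if f₁ x = f₂ x then (0 : ℝ) else 1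

/-- The completeness `c(G) = 1 − Σ G(f₁,f₂) dist(f₁,f₂)`. -/
def completeness {k : ℕ} (G : BF k → BF k → ℝ) : ℝ :=
  1 - (1 / 2 : ℝ) * ∑ f₁, ∑ f₂, G f₁ f₂ * ndistB f₁ f₂

/-!
Subdivide every edge `{f₁, f₂}` of `G` into a path from `f₁` to `f₂` that changes the points where
they differ one at a time, so that every step has normalized Hamming length `2^{-k}`. The path has
`2^k dist(f₁, f₂)` steps of total length `dist(f₁, f₂)`, so after dividing all weights by
`(1 - c(G)) 2^k` the new gadget has total weight `1` and completeness `1 - 2^{-k}`. An assignment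
that cuts an edge of `G` cuts some step of its path, so its loss on the new gadget is at least
`1 / ((1 - c(G)) 2^k)` times its loss on `G`; this survives taking maxima over extensions and
averaging over folded assignments, which is the claimed bound on the relaxed soundness.
-/

namespace HadamardGadget

section WeightedGraph

variable {V : Type*}

def edgeInd [DecidableEq V] (a b : V) (f g : V) : ℝ :=
  if (f = a ∧ g = b) ∨ (f = b ∧ g = a) then 1 else 0

lemma edgeInd_comm [DecidableEq V] (a b f g : V) : edgeInd a b f g = edgeInd a b g f := by
  unfold edgeInd
  exact if_congr (by tauto) rfl rfl

lemma edgeInd_nonneg [DecidableEq V] (a b f g : V) : 0 ≤ edgeInd a b f g := by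
  unfold edgeInd
  split <;> norm_num

lemma edgeInd_eq_zero_of_rel [DecidableEq V] {R : V → V → Prop} (hR : ∀ f g, R f g → R g f)
    {a b f g : V} (hab : ¬ R a b) (hfg : R f g) : edgeInd a b f g = 0 := by
  rw [edgeInd, if_neg]
  rintro (⟨rfl, rfl⟩ | ⟨rfl, rfl⟩)
  exacts [hab hfg, hab (hR _ _ hfg)]

def disagree {β : Type*} [DecidableEq β] (A : V → β) (f g : V) : ℝ :=
  if A f = A g then 0 else 1

lemma disagree_comm {β : Type*} [DecidableEq β] (A : V → β) (f g : V) :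
    disagree A f g = disagree A g f := by
  simp only [disagree, eq_comm]

lemma disagree_nonneg {β : Type*} [DecidableEq β] (A : V → β) (f g : V) : 0 ≤ disagree A f g := by
  unfold disagree
  split <;> norm_num

variable [Fintype V]

def edgeSum (H w : V → V → ℝ) : ℝ :=
  (1 / 2 : ℝ) * ∑ f, ∑ g, H f g * w f g

lemma edgeSum_one (H : V → V → ℝ) : edgeSum H 1 = (1 / 2 : ℝ) * ∑ f, ∑ g, H f g := by
  simp [edgeSum]

lemma edgeSum_smul_left (c : ℝ) (H w : V → V → ℝ) : edgeSum (c • H) w = c * edgeSum H w := by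
  simp only [edgeSum, Pi.smul_apply, smul_eq_mul, mul_assoc, ← Finset.mul_sum]
  ring

lemma edgeSum_smul_right (c : ℝ) (H w : V → V → ℝ) : edgeSum H (c • w) = c * edgeSum H w := by
  simp only [edgeSum, Pi.smul_apply, smul_eq_mul, mul_left_comm _ c, ← Finset.mul_sum]

lemma edgeSum_sum {ι : Type*} (s : Finset ι) (H : ι → V → V → ℝ) (w : V → V → ℝ) :
    edgeSum (∑ i ∈ s, H i) w = ∑ i ∈ s, edgeSum (H i) w := by
  simp only [edgeSum, Finset.sum_apply, Finset.sum_mul, ← Finset.mul_sum]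
  rw [Finset.sum_comm_cycle]

lemma edgeSum_le_edgeSum {H w w' : V → V → ℝ} (h : ∀ f g, H f g * w f g ≤ H f g * w' f g) :
    edgeSum H w ≤ edgeSum H w' := by
  unfold edgeSum
  gcongr 1 / 2 * ?_
  exact Finset.sum_le_sum fun f _ => Finset.sum_le_sum fun g _ => h f g

lemma edgeSum_edgeInd [DecidableEq V] {a b : V} (hab : a ≠ b) {w : V → V → ℝ}
    (hw : ∀ f g, w f g = w g f) : edgeSum (edgeInd a b) w = w a b := by
  have split : ∀ f g, edgeInd a b f g * w f g =
      (if g = b then if f = a then w f g else 0 else 0) +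
        (if g = a then if f = b then w f g else 0 else 0) := by
    intro f g
    unfold edgeInd
    by_cases hfa : f = a <;> by_cases hfb : f = b <;> by_cases hga : g = a <;>
      by_cases hgb : g = b <;> simp_all
  simp only [edgeSum, split, Finset.sum_add_distrib, Finset.sum_ite_eq', Finset.mem_univ, if_true]
  rw [hw b a]
  ring

end WeightedGraph

section Hybrid

variable {k : ℕ}

def pointOrder (k : ℕ) : (Fin k → ZMod 2) ≃ Fin (2 ^ k) :=
  Fintype.equivFinOfCardEq (by simp)

def hybrid (f₁ f₂ : BF k) (j : ℕ) : BF k :=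
  fun x => if (pointOrder k x : ℕ) < j then f₂ x else f₁ x

lemma hybrid_zero (f₁ f₂ : BF k) : hybrid f₁ f₂ 0 = f₁ := by
  funext x
  simp [hybrid]

lemma hybrid_two_pow (f₁ f₂ : BF k) : hybrid f₁ f₂ (2 ^ k) = f₂ := by
  funext x
  simp [hybrid]

lemma hybrid_apply_self (f₁ f₂ : BF k) (x : Fin k → ZMod 2) :
    hybrid f₁ f₂ (pointOrder k x) x = f₁ x := by
  simp [hybrid]

lemma hybrid_succ_apply_self (f₁ f₂ : BF k) (x : Fin k → ZMod 2) :
    hybrid f₁ f₂ (pointOrder k x + 1) x = f₂ x := by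
  simp [hybrid]

lemma hybrid_succ_apply_of_ne (f₁ f₂ : BF k) {x y : Fin k → ZMod 2} (hxy : y ≠ x) :
    hybrid f₁ f₂ (pointOrder k x + 1) y = hybrid f₁ f₂ (pointOrder k x) y := by
  have : (pointOrder k y : ℕ) ≠ pointOrder k x := by
    simpa [Fin.val_eq_val] using hxy
  simp only [hybrid, Nat.lt_succ_iff_lt_or_eq, this, or_false]

lemma hybrid_step_eq {f₁ f₂ : BF k} {x : Fin k → ZMod 2} (hx : f₁ x = f₂ x) :
    hybrid f₁ f₂ (pointOrder k x + 1) = hybrid f₁ f₂ (pointOrder k x) := by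
  funext y
  rcases eq_or_ne y x with rfl | hy
  · rw [hybrid_apply_self, hybrid_succ_apply_self, hx]
  · exact hybrid_succ_apply_of_ne f₁ f₂ hy

lemma hybrid_step_ne {f₁ f₂ : BF k} {x : Fin k → ZMod 2} (hx : f₁ x ≠ f₂ x) :
    hybrid f₁ f₂ (pointOrder k x) ≠ hybrid f₁ f₂ (pointOrder k x + 1) := fun h => by
  simpa [hybrid_apply_self, hybrid_succ_apply_self, hx] using congrFun h x

lemma hybrid_step_ne_negB (hk : 1 ≤ k) (f₁ f₂ : BF k) (x : Fin k → ZMod 2) :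
    hybrid f₁ f₂ (pointOrder k x + 1) ≠ negB (hybrid f₁ f₂ (pointOrder k x)) := fun h => by
  have : Nonempty (Fin k) := ⟨⟨0, hk⟩⟩
  obtain ⟨y, hy⟩ := exists_ne x
  simpa [negB, hybrid_succ_apply_of_ne f₁ f₂ hy] using congrFun h y

lemma ndistB_hybrid_step {f₁ f₂ : BF k} {x : Fin k → ZMod 2} (hx : f₁ x ≠ f₂ x) :
    ndistB (hybrid f₁ f₂ (pointOrder k x)) (hybrid f₁ f₂ (pointOrder k x + 1)) =
      (2 ^ k : ℝ)⁻¹ := by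
  rw [ndistB, Finset.sum_eq_single x, hybrid_apply_self, hybrid_succ_apply_self, if_neg hx,
    mul_one]
  · intro y _ hy
    rw [hybrid_succ_apply_of_ne f₁ f₂ hy, if_pos rfl]
  · simp

lemma exists_hybrid_step_ne {β : Type*} (A : BF k → β) {f₁ f₂ : BF k} (h : A f₁ ≠ A f₂) :
    ∃ x, f₁ x ≠ f₂ x ∧
      A (hybrid f₁ f₂ (pointOrder k x)) ≠ A (hybrid f₁ f₂ (pointOrder k x + 1)) := by
  by_contra! hsteps
  have hstep : ∀ j < 2 ^ k, A (hybrid f₁ f₂ j) = A (hybrid f₁ f₂ (j + 1)) := by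
    intro j hj
    set x := (pointOrder k).symm ⟨j, hj⟩
    have hxj : (pointOrder k x : ℕ) = j := by simp [x]
    by_cases hx : f₁ x = f₂ x
    · rw [← hxj, hybrid_step_eq hx]
    · simpa [hxj] using hsteps x hx
  have hconst : ∀ j ≤ 2 ^ k, A (hybrid f₁ f₂ j) = A f₁ := by
    intro j hj
    induction j with
    | zero => rw [hybrid_zero]
    | succ j ih => rw [← hstep j (by omega), ih (by omega)]
  exact h (by rw [← hconst _ le_rfl, hybrid_two_pow])

end Hybrid

section Subdivision

variable {k : ℕ}

def pathSum (w : BF k → BF k → ℝ) (f₁ f₂ : BF k) : ℝ :=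
  ∑ x with f₁ x ≠ f₂ x, w (hybrid f₁ f₂ (pointOrder k x)) (hybrid f₁ f₂ (pointOrder k x + 1))

def pathGadget (f₁ f₂ : BF k) : BF k → BF k → ℝ :=
  ∑ x with f₁ x ≠ f₂ x, edgeInd (hybrid f₁ f₂ (pointOrder k x)) (hybrid f₁ f₂ (pointOrder k x + 1))

/-- Weights are indexed by ordered pairs, so the edge `{f₁, f₂}` is subdivided along both the path
from `f₁` to `f₂` and the (different) path from `f₂` to `f₁`, each with half its weight. -/
def subdivide (G : BF k → BF k → ℝ) : BF k → BF k → ℝ :=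
  ∑ p : BF k × BF k, (G p.1 p.2 / 2) • pathGadget p.1 p.2

lemma edgeSum_pathGadget {w : BF k → BF k → ℝ} (hw : ∀ f g, w f g = w g f) (f₁ f₂ : BF k) :
    edgeSum (pathGadget f₁ f₂) w = pathSum w f₁ f₂ := by
  rw [pathGadget, edgeSum_sum]
  exact Finset.sum_congr rfl fun x hx =>
    edgeSum_edgeInd (hybrid_step_ne (Finset.mem_filter.1 hx).2) hw

lemma edgeSum_subdivide (G : BF k → BF k → ℝ) {w : BF k → BF k → ℝ}
    (hw : ∀ f g, w f g = w g f) : edgeSum (subdivide G) w = edgeSum G (pathSum w) := by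
  rw [subdivide, edgeSum_sum, Fintype.sum_prod_type, edgeSum, Finset.mul_sum]
  refine Finset.sum_congr rfl fun f _ => ?_
  rw [Finset.mul_sum]
  refine Finset.sum_congr rfl fun g _ => ?_
  rw [edgeSum_smul_left, edgeSum_pathGadget hw]
  ring

lemma pathSum_one : pathSum 1 = (2 ^ k : ℝ) • (ndistB : BF k → BF k → ℝ) := by
  funext f₁ f₂
  rw [pathSum, Pi.smul_apply, Pi.smul_apply, smul_eq_mul, ndistB, ← mul_assoc,
    mul_inv_cancel₀ (by positivity), one_mul, Finset.sum_filter]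
  simp

lemma pathSum_ndistB : pathSum ndistB = (ndistB : BF k → BF k → ℝ) := by
  funext f₁ f₂
  calc pathSum ndistB f₁ f₂ = (2 ^ k : ℝ)⁻¹ * pathSum 1 f₁ f₂ := by
        rw [pathSum, pathSum, Finset.mul_sum]
        refine Finset.sum_congr rfl fun x hx => ?_
        rw [ndistB_hybrid_step (Finset.mem_filter.1 hx).2, Pi.one_apply, Pi.one_apply, mul_one]
    _ = ndistB f₁ f₂ := by
        rw [pathSum_one, Pi.smul_apply, Pi.smul_apply, smul_eq_mul, ← mul_assoc,
          inv_mul_cancel₀ (by positivity), one_mul]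

lemma disagree_le_pathSum {β : Type*} [DecidableEq β] (A : BF k → β) (f₁ f₂ : BF k) :
    disagree A f₁ f₂ ≤ pathSum (disagree A) f₁ f₂ := by
  by_cases h : A f₁ = A f₂
  · rw [disagree, if_pos h]
    exact Finset.sum_nonneg fun _ _ => disagree_nonneg A _ _
  · obtain ⟨x, hx, hcut⟩ := exists_hybrid_step_ne A h
    calc disagree A f₁ f₂ = 1 := if_neg h
      _ = disagree A (hybrid f₁ f₂ (pointOrder k x)) (hybrid f₁ f₂ (pointOrder k x + 1)) :=
        (if_neg hcut).symm
      _ ≤ pathSum (disagree A) f₁ f₂ :=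
        Finset.single_le_sum (f := fun y => disagree A (hybrid f₁ f₂ (pointOrder k y))
            (hybrid f₁ f₂ (pointOrder k y + 1)))
          (fun _ _ => disagree_nonneg A _ _) (Finset.mem_filter.2 ⟨Finset.mem_univ x, hx⟩)

lemma subdivide_comm (G : BF k → BF k → ℝ) (f g : BF k) : subdivide G f g = subdivide G g f := by
  simp only [subdivide, pathGadget, Finset.sum_apply, Pi.smul_apply, edgeInd_comm _ _ f g]

lemma subdivide_nonneg {G : BF k → BF k → ℝ} (hG : ∀ f₁ f₂, 0 ≤ G f₁ f₂) (f g : BF k) :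
    0 ≤ subdivide G f g := by
  simp only [subdivide, pathGadget, Finset.sum_apply, Pi.smul_apply, smul_eq_mul]
  exact Finset.sum_nonneg fun p _ => mul_nonneg (div_nonneg (hG _ _) zero_le_two)
    (Finset.sum_nonneg fun _ _ => edgeInd_nonneg _ _ _ _)

lemma subdivide_eq_zero_of_rel {R : BF k → BF k → Prop} (hR : ∀ f g, R f g → R g f)
    (hstep : ∀ f₁ f₂ x, f₁ x ≠ f₂ x →
      ¬ R (hybrid f₁ f₂ (pointOrder k x)) (hybrid f₁ f₂ (pointOrder k x + 1)))
    (G : BF k → BF k → ℝ) {f g : BF k} (hfg : R f g) : subdivide G f g = 0 := by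
  simp only [subdivide, pathGadget, Finset.sum_apply, Pi.smul_apply, smul_eq_mul]
  refine Finset.sum_eq_zero fun p _ => mul_eq_zero_of_right _ (Finset.sum_eq_zero fun x hx => ?_)
  exact edgeInd_eq_zero_of_rel hR (hstep p.1 p.2 x (Finset.mem_filter.1 hx).2) hfg

lemma subdivide_self (G : BF k → BF k → ℝ) (f : BF k) : subdivide G f f = 0 :=
  subdivide_eq_zero_of_rel (R := (· = ·)) (fun _ _ => Eq.symm)
    (fun _ _ _ hx => hybrid_step_ne hx) G rfl

lemma subdivide_negB (hk : 1 ≤ k) (G : BF k → BF k → ℝ) (f : BF k) :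
    subdivide G f (negB f) = 0 := by
  have hneg : ∀ g : BF k, negB (negB g) = g := fun g => funext fun x => Bool.not_not (g x)
  refine subdivide_eq_zero_of_rel (R := fun f g => g = negB f) (fun f g h => ?_)
    (fun f₁ f₂ x _ => hybrid_step_ne_negB hk f₁ f₂ x) G rfl
  rw [h, hneg]

end Subdivision

section Gadget

variable {k : ℕ}

lemma ndistB_comm (f g : BF k) : ndistB f g = ndistB g f := by
  simp only [ndistB, eq_comm]

lemma inv_two_pow_le_ndistB {f g : BF k} (h : f ≠ g) : (2 ^ k : ℝ)⁻¹ ≤ ndistB f g := by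
  obtain ⟨x, hx⟩ := Function.ne_iff.1 h
  rw [ndistB]
  refine le_mul_of_one_le_right (by positivity) ?_
  calc (1 : ℝ) = if f x = g x then 0 else 1 := (if_neg hx).symm
    _ ≤ ∑ y, if f y = g y then (0 : ℝ) else 1 :=
      Finset.single_le_sum (f := fun y => if f y = g y then (0 : ℝ) else 1)
        (fun _ _ => by split <;> norm_num) (Finset.mem_univ x)

lemma one_sub_completeness (G : BF k → BF k → ℝ) : 1 - completeness G = edgeSum G ndistB := by
  rw [completeness, edgeSum]
  ring

lemma inv_two_pow_le_one_sub_completeness {G : BF k → BF k → ℝ} (hG0 : ∀ f g, 0 ≤ G f g)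
    (hGdiag : ∀ f, G f f = 0) (hG1 : edgeSum G 1 = 1) :
    (2 ^ k : ℝ)⁻¹ ≤ 1 - completeness G := by
  have hle : ∀ f g, G f g * ((2 ^ k : ℝ)⁻¹ • (1 : BF k → BF k → ℝ)) f g ≤ G f g * ndistB f g := by
    intro f g
    simp only [Pi.smul_apply, Pi.one_apply, smul_eq_mul, mul_one]
    rcases eq_or_ne f g with rfl | hfg
    · simp [hGdiag]
    · exact mul_le_mul_of_nonneg_left (inv_two_pow_le_ndistB hfg) (hG0 f g)
  calc (2 ^ k : ℝ)⁻¹ = edgeSum G ((2 ^ k : ℝ)⁻¹ • 1) := by rw [edgeSum_smul_right, hG1, mul_one]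
    _ ≤ edgeSum G ndistB := edgeSum_le_edgeSum hle
    _ = 1 - completeness G := (one_sub_completeness G).symm

lemma rsFoldSet_nonempty : (rsFoldSet k).Nonempty := by
  refine ⟨fun f => if f 0 then 1 else 0, Finset.mem_filter.2 ⟨Finset.mem_univ _, fun f _ => ?_⟩⟩
  cases h : f 0 <;> simp [negB, h]
  decide

lemma rsoundness_le_of_valA_le {G H : BF k → BF k → ℝ} {a b : ℝ} (hb : 0 ≤ b)
    (h : ∀ A, valA H A ≤ a + b * valA G A) : rsoundness H ≤ a + b * rsoundness G := by
  have hcard : ((rsFoldSet k).card : ℝ) ≠ 0 := by simp [rsFoldSet_nonempty.ne_empty]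
  unfold rsoundness
  calc _ ≤ ((rsFoldSet k).card : ℝ)⁻¹ * ∑ P ∈ rsFoldSet k, (a + b * sSup {v : ℝ | ∃ A,
        (∀ f, (Primary f ∨ f = oneB k ∨ f = negOneB k) → A f = P f) ∧ v = valA G A}) := by
        gcongr with P
        refine csSup_le ⟨_, P, fun _ _ => rfl, rfl⟩ ?_
        rintro _ ⟨A, hA, rfl⟩
        have hbdd : BddAbove {v : ℝ | ∃ A,
            (∀ f, (Primary f ∨ f = oneB k ∨ f = negOneB k) → A f = P f) ∧ v = valA G A} :=
          ((Set.finite_range (valA G)).subset <| by rintro _ ⟨A, -, rfl⟩; exact ⟨A, rfl⟩).bddAbove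
        exact (h A).trans (by gcongr; exact le_csSup hbdd ⟨A, hA, rfl⟩)
    _ = _ := by
      rw [Finset.sum_add_distrib, Finset.sum_const, nsmul_eq_mul, ← Finset.mul_sum]
      field_simp

lemma valA_eq_edgeSum_sub (H : BF k → BF k → ℝ) (A : BF k → ZMod 2) :
    valA H A = edgeSum H 1 - edgeSum H (disagree A) := by
  simp only [valA, edgeSum, disagree, ← mul_sub, ← Finset.sum_sub_distrib, Pi.one_apply]
  congr 1
  refine Finset.sum_congr rfl fun f _ => Finset.sum_congr rfl fun g _ => ?_
  split_ifs <;> ring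

lemma edgeSum_subdivide_one (G : BF k → BF k → ℝ) :
    edgeSum (subdivide G) 1 = 2 ^ k * (1 - completeness G) := by
  rw [edgeSum_subdivide G fun _ _ => rfl, pathSum_one, edgeSum_smul_right, one_sub_completeness]

lemma edgeSum_disagree_le_subdivide {G : BF k → BF k → ℝ} (hG0 : ∀ f g, 0 ≤ G f g)
    (A : BF k → ZMod 2) : edgeSum G (disagree A) ≤ edgeSum (subdivide G) (disagree A) := by
  rw [edgeSum_subdivide G (disagree_comm A)]
  exact edgeSum_le_edgeSum fun f g =>
    mul_le_mul_of_nonneg_left (disagree_le_pathSum A f g) (hG0 f g)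

end Gadget

end HadamardGadget

open HadamardGadget

theorem exists_gadget_max_completeness_general {k : ℕ} (hk : 2 ≤ k) (G : BF k → BF k → ℝ)
    (hG0 : ∀ f₁ f₂, 0 ≤ G f₁ f₂) (hGdiag : ∀ f, G f f = 0)
    (hGtot : (1 / 2 : ℝ) * ∑ f₁, ∑ f₂, G f₁ f₂ = 1) :
    ∃ Gt : BF k → BF k → ℝ,
      (∀ f₁ f₂, Gt f₁ f₂ = Gt f₂ f₁) ∧ (∀ f₁ f₂, 0 ≤ Gt f₁ f₂) ∧
      (∀ f, Gt f f = 0) ∧ (∀ f, Gt f (negB f) = 0) ∧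
      (1 / 2 : ℝ) * ∑ f₁, ∑ f₂, Gt f₁ f₂ = 1 ∧
      completeness Gt = 1 - (2 ^ k : ℝ)⁻¹ ∧
      (1 - rsoundness G) / (1 - completeness G)
        ≤ (1 - rsoundness Gt) / (1 - completeness Gt) := by
  have hG1 : edgeSum G 1 = 1 := by rwa [edgeSum_one]
  have hδ : 0 < 1 - completeness G := lt_of_lt_of_le (by positivity)
    (inv_two_pow_le_one_sub_completeness hG0 hGdiag hG1)
  set c : ℝ := (2 ^ k * (1 - completeness G))⁻¹ with hc
  have hc0 : 0 < c := by positivity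
  have hcδ : c * (1 - completeness G) = (2 ^ k : ℝ)⁻¹ := by
    rw [hc]
    field_simp
  have htot : edgeSum (c • subdivide G) 1 = 1 := by
    rw [edgeSum_smul_left, edgeSum_subdivide_one, hc, inv_mul_cancel₀ (by positivity)]
  have hcomp : 1 - completeness (c • subdivide G) = (2 ^ k : ℝ)⁻¹ := by
    rw [one_sub_completeness, edgeSum_smul_left, edgeSum_subdivide G ndistB_comm, pathSum_ndistB,
      ← one_sub_completeness, hcδ]
  have hval : ∀ A, valA (c • subdivide G) A ≤ (1 - c) + c * valA G A := by
    intro A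
    rw [valA_eq_edgeSum_sub, valA_eq_edgeSum_sub, htot, hG1, edgeSum_smul_left]
    have := mul_le_mul_of_nonneg_left (edgeSum_disagree_le_subdivide hG0 A) hc0.le
    linarith
  have hrs := rsoundness_le_of_valA_le hc0.le hval
  refine ⟨c • subdivide G, fun f g => by simp only [Pi.smul_apply, subdivide_comm G f g],
    fun f g => smul_nonneg hc0.le (subdivide_nonneg hG0 f g),
    fun f => by simp only [Pi.smul_apply, subdivide_self, smul_zero],
    fun f => by simp only [Pi.smul_apply, subdivide_negB (Nat.one_le_of_lt hk), smul_zero],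
    by rwa [← edgeSum_one], by linarith, ?_⟩
  rw [hcomp, div_le_div_iff₀ hδ (by positivity)]
  calc (1 - rsoundness G) * (2 ^ k : ℝ)⁻¹
      = c * (1 - rsoundness G) * (1 - completeness G) := by rw [← hcδ]; ring
    _ ≤ (1 - rsoundness (c • subdivide G)) * (1 - completeness G) := by gcongr; linarith

/-- For any `Had_k`-to-`2Lin(2)` gadget `G` there exists a gadget `G̃` with completeness
`1 − 2^{−k}` such that `(1 − rs(G))/(1 − c(G)) ≤ (1 − rs(G̃))/(1 − c(G̃))`. -/
theorem exists_gadget_max_completeness {k : ℕ} (hk : 2 ≤ k) (G : BF k → BF k → ℝ)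
    (hGsymm : ∀ f₁ f₂, G f₁ f₂ = G f₂ f₁) (hG0 : ∀ f₁ f₂, 0 ≤ G f₁ f₂)
    (hGdiag : ∀ f, G f f = 0) (hGneg : ∀ f, G f (negB f) = 0)
    (hGtot : (1 / 2 : ℝ) * ∑ f₁, ∑ f₂, G f₁ f₂ = 1) :
    ∃ Gt : BF k → BF k → ℝ,
      (∀ f₁ f₂, Gt f₁ f₂ = Gt f₂ f₁) ∧ (∀ f₁ f₂, 0 ≤ Gt f₁ f₂) ∧
      (∀ f, Gt f f = 0) ∧ (∀ f, Gt f (negB f) = 0) ∧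
      (1 / 2 : ℝ) * ∑ f₁, ∑ f₂, Gt f₁ f₂ = 1 ∧
      completeness Gt = 1 - (2 ^ k : ℝ)⁻¹ ∧
      (1 - rsoundness G) / (1 - completeness G)
        ≤ (1 - rsoundness Gt) / (1 - completeness Gt) :=
  exists_gadget_max_completeness_general hk G hG0 hGdiag hGtot
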